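/- arXiv:2112.01235 — 6 statements merged into one kernel-verified Lean document; each statement's English description precedes it below -/
import Mathlib

section
/- Let $c = \cos\theta$ and $\rho^2 = r^2 + a^2 c^2 \neq 0$, and let $\Psi_2 = -\frac{i\, c\, m a + m r - q^2}{(r - i a c)^3 (r + i a c)}$ be the complex Weyl scalar of the Kerr–Newman–(anti)-de Sitter metric (viewed as a complex-valued function of the real variables $r, \theta, a, m, q$). Define $I_1 = \frac{48}{\rho^{12}}\big(-a^3 m c^3 + (-3 a^2 m r + a^2 q^2) c^2 + (3 a m r^2 - 2 a q^2 r) c + (m r - q^2) r^2\big)\big(a^3 m c^3 + (-3 a^2 m r + a^2 q^2) c^2 + (-3 a m r^2 + 2 a q^2 r) c + (m r - q^2) r^2\big)$ and $K_2 = \frac{96 a}{\rho^{12}}\,(a^2 m c^3 - 3 m r^2 c + 2 q^2 r c)\,(-3 a^2 c^2 m r + a^2 c^2 q^2 + m r^3 - q^2 r^2)$. Then $I_1 - i K_2 = 48\,\Psi_2^2$. -/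
/-!
With `z = r + i a c` we have `z̄ z = ρ²`, so `Ψ₂ = -W / ρ⁶` where `W = (m r - q² + i m a c) z²`
(the denominator of `Ψ₂` is `z̄³ z`). Writing `W = X + i Y`, the two factors of `I₁` are
`X + Y` and `X - Y`, while `a` times the first factor of `K₂` is `-Y` and its second factor is `X`.
Hence `I₁ - i K₂ = 48 (X² - Y² + 2 i X Y) / ρ¹² = 48 W² / ρ¹² = 48 Ψ₂²`.
-/

open Complex

theorem div_pow_three_mul_of_mul_eq {K : Type*} [Field K] {z w p : K} (h : z * w = p)
    (hp : p ≠ 0) (n : K) : n / (z ^ 3 * w) = n * w ^ 2 / p ^ 3 := by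
  obtain ⟨hz, hw⟩ := mul_ne_zero_iff.mp (h ▸ hp)
  rw [div_eq_div_iff (mul_ne_zero (pow_ne_zero 3 hz) hw) (pow_ne_zero 3 hp), ← h]
  ring

theorem ofReal_sub_I_mul_mul_ofReal_add_I_mul (x y : ℝ) :
    ((x : ℂ) - I * y) * (x + I * y) = ((x ^ 2 + y ^ 2 : ℝ) : ℂ) := by
  push_cast
  linear_combination (-(y : ℂ) ^ 2) * I_sq

theorem kerrNewman_weyl_numerator_eq (r a m q c : ℝ) :
    (I * c * m * a + m * r - q ^ 2) * ((r : ℂ) + I * a * c) ^ 2 =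
      ((m * r ^ 3 - q ^ 2 * r ^ 2 - 3 * m * a ^ 2 * c ^ 2 * r + q ^ 2 * a ^ 2 * c ^ 2 : ℝ) : ℂ) +
        I * ((3 * m * a * c * r ^ 2 - 2 * a * c * q ^ 2 * r - m * a ^ 3 * c ^ 3 : ℝ) : ℂ) := by
  push_cast
  linear_combination (I * m * a ^ 3 * c ^ 3 + (m * r - q ^ 2) * a ^ 2 * c ^ 2
    + 2 * m * a ^ 2 * c ^ 2 * r) * I_sq

theorem weyl_invariant_NP_relation_general
    (r a m q : ℝ) (c ρ2 : ℝ)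
    (hρ2 : ρ2 = r ^ 2 + a ^ 2 * c ^ 2) (hρ : ρ2 ≠ 0)
    (Ψ2 : ℂ)
    (hΨ2 : Ψ2 = -((Complex.I * c * m * a + m * r - q ^ 2) /
        (((r : ℂ) - Complex.I * a * c) ^ 3 * ((r : ℂ) + Complex.I * a * c))))
    (I1 K2 : ℝ)
    (hI1 : I1 = (48 / ρ2 ^ 6) *
      (-(a ^ 3 * m * c ^ 3) + (-(3 * a ^ 2 * m * r) + a ^ 2 * q ^ 2) * c ^ 2
        + (3 * a * m * r ^ 2 - 2 * a * q ^ 2 * r) * c + (m * r - q ^ 2) * r ^ 2) *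
      (a ^ 3 * m * c ^ 3 + (-(3 * a ^ 2 * m * r) + a ^ 2 * q ^ 2) * c ^ 2
        + (-(3 * a * m * r ^ 2) + 2 * a * q ^ 2 * r) * c + (m * r - q ^ 2) * r ^ 2))
    (hK2 : K2 = (96 * a / ρ2 ^ 6) *
      (a ^ 2 * m * c ^ 3 - 3 * m * r ^ 2 * c + 2 * q ^ 2 * r * c) *
      (-(3 * a ^ 2 * c ^ 2 * m * r) + a ^ 2 * c ^ 2 * q ^ 2 + m * r ^ 3 - q ^ 2 * r ^ 2)) :
    (I1 : ℂ) - Complex.I * K2 = 48 * Ψ2 ^ 2 := by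
  have hz : ((r : ℂ) - I * a * c) * (r + I * a * c) = ρ2 := by
    simpa [hρ2, mul_assoc, mul_pow] using ofReal_sub_I_mul_mul_ofReal_add_I_mul r (a * c)
  rw [hΨ2, div_pow_three_mul_of_mul_eq hz (by exact_mod_cast hρ),
    kerrNewman_weyl_numerator_eq, hI1, hK2]
  push_cast
  linear_combination
    (-48 * (3 * m * a * c * r ^ 2 - 2 * a * c * q ^ 2 * r - m * a ^ 3 * c ^ 3 : ℂ) ^ 2 /
      (ρ2 : ℂ) ^ 6) * I_sq

/-- `I₁ - i K₂ = 48 Ψ₂²` for the Kerr–Newman–(anti)-de Sitter black hole. -/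
theorem weyl_invariant_NP_relation
    (r θ a m q : ℝ) (c ρ2 : ℝ)
    (hc : c = Real.cos θ) (hρ2 : ρ2 = r ^ 2 + a ^ 2 * c ^ 2) (hρ : ρ2 ≠ 0)
    (Ψ2 : ℂ)
    (hΨ2 : Ψ2 = -((Complex.I * c * m * a + m * r - q ^ 2) /
        (((r : ℂ) - Complex.I * a * c) ^ 3 * ((r : ℂ) + Complex.I * a * c))))
    (I1 K2 : ℝ)
    (hI1 : I1 = (48 / ρ2 ^ 6) *
      (-(a ^ 3 * m * c ^ 3) + (-(3 * a ^ 2 * m * r) + a ^ 2 * q ^ 2) * c ^ 2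
        + (3 * a * m * r ^ 2 - 2 * a * q ^ 2 * r) * c + (m * r - q ^ 2) * r ^ 2) *
      (a ^ 3 * m * c ^ 3 + (-(3 * a ^ 2 * m * r) + a ^ 2 * q ^ 2) * c ^ 2
        + (-(3 * a * m * r ^ 2) + 2 * a * q ^ 2 * r) * c + (m * r - q ^ 2) * r ^ 2))
    (hK2 : K2 = (96 * a / ρ2 ^ 6) *
      (a ^ 2 * m * c ^ 3 - 3 * m * r ^ 2 * c + 2 * q ^ 2 * r * c) *
      (-(3 * a ^ 2 * c ^ 2 * m * r) + a ^ 2 * c ^ 2 * q ^ 2 + m * r ^ 3 - q ^ 2 * r ^ 2)) :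
    (I1 : ℂ) - Complex.I * K2 = 48 * Ψ2 ^ 2 :=
  weyl_invariant_NP_relation_general r a m q c ρ2 hρ2 hρ Ψ2 hΨ2 I1 K2 hI1 hK2
end

section
/- Let $c = \cos\theta$, $\rho^2 = r^2 + a^2 c^2 \neq 0$. Define the complex quantities $\mathbb{I} = -\frac{96\left(\frac{c^2 a^2 m^2}{2} + (-i a m^2 r + i m q^2 a) c - \frac{m^2 r^2}{2} + m q^2 r - \frac{q^4}{2}\right)}{\rho^4 (r - i a c)^4}$, $\mathbb{K} = I_9 + i I_{10}$ where $I_9 = -\frac{16 q^4 (-3 a^2 c^2 m r + a^2 c^2 q^2 + m r^3 - q^2 r^2)}{\rho^{14}}$ and $I_{10} = \frac{16 a q^4 (a^2 m c^3 - 3 m r^2 c + 2 q^2 r c)}{\rho^{14}}$, and $\mathbb{L} = -\frac{128 q^4 \left(\frac{c^2 a^2 m^2}{2} + (-i a m^2 r + i m q^2 a) c - \frac{m^2 r^2}{2} + m q^2 r - \frac{q^4}{2}\right)}{\rho^{12} (r - i a c)^4}$. Then $3\,\mathbb{L}^2 = \mathbb{I}\,\mathbb{K}^2$. -/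
/-!
Kerr–Newman is of Petrov type D: in the Kinnersley tetrad the only nonzero curvature scalars are
`Ψ₂ = (q² - m (r + i a c)) / ((r - i a c)³ (r + i a c))` and `Φ₁₁ = q² / (2 ρ⁴)`. The three
invariants are monomials in them, `𝕀 = 48 Ψ₂²`, `𝕂 = 64 Φ₁₁² Ψ₂`, `𝕃 = 256 Φ₁₁² Ψ₂²`, so
`3 𝕃² = 3 · 2¹⁶ Φ₁₁⁴ Ψ₂⁴ = 𝕀 𝕂²`. Identifying the invariants uses only that the quadratic in
`𝕀` and `𝕃` is `-(q² - m (r + i a c))² / 2` and that `ρ² = (r - i a c)(r + i a c)`.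
-/

open Complex

namespace KerrNewman

noncomputable def psi2 (r a c m q : ℝ) : ℂ :=
  (q ^ 2 - m * (r + I * a * c)) / ((r - I * a * c) ^ 3 * (r + I * a * c))

noncomputable def phi11 (r a c q : ℝ) : ℝ :=
  q ^ 2 / (2 * (r ^ 2 + a ^ 2 * c ^ 2) ^ 2)

variable {r a c m q : ℝ}

theorem sub_mul_add_eq_sq_add_sq (r a c : ℝ) :
    ((r : ℂ) - I * a * c) * (r + I * a * c) = r ^ 2 + a ^ 2 * c ^ 2 := by
  linear_combination (-(a : ℂ) ^ 2 * c ^ 2) * I_sq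

theorem sub_ne_zero_and_add_ne_zero (hρ : r ^ 2 + a ^ 2 * c ^ 2 ≠ 0) :
    (r : ℂ) - I * a * c ≠ 0 ∧ (r : ℂ) + I * a * c ≠ 0 := by
  have : ((r : ℂ) - I * a * c) * (r + I * a * c) ≠ 0 := by
    rw [sub_mul_add_eq_sq_add_sq]; exact_mod_cast hρ
  exact ⟨left_ne_zero_of_mul this, right_ne_zero_of_mul this⟩

theorem numerator_eq_neg_half_sq (r a c m q : ℝ) :
    (c ^ 2 * a ^ 2 * m ^ 2 / 2 : ℂ) + (-(I * a * m ^ 2 * r) + I * m * q ^ 2 * a) * c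
        - m ^ 2 * r ^ 2 / 2 + m * q ^ 2 * r - q ^ 4 / 2
      = -(q ^ 2 - m * (r + I * a * c)) ^ 2 / 2 := by
  linear_combination ((a : ℂ) ^ 2 * c ^ 2 * m ^ 2 / 2) * I_sq

theorem zakharyI_eq_psi2_sq (hρ : r ^ 2 + a ^ 2 * c ^ 2 ≠ 0) :
    -(96 * ((c ^ 2 * a ^ 2 * m ^ 2 / 2)
        + (-(I * a * m ^ 2 * r) + I * m * q ^ 2 * a) * c
        - m ^ 2 * r ^ 2 / 2 + m * q ^ 2 * r - q ^ 4 / 2)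
        / (((r ^ 2 + a ^ 2 * c ^ 2 : ℝ) : ℂ) ^ 2 * ((r : ℂ) - I * a * c) ^ 4))
      = 48 * psi2 r a c m q ^ 2 := by
  obtain ⟨hz, hzb⟩ := sub_ne_zero_and_add_ne_zero hρ
  rw [numerator_eq_neg_half_sq, psi2]
  push_cast
  rw [← sub_mul_add_eq_sq_add_sq]
  field_simp
  ring

theorem zakharyL_eq_phi11_sq_mul_psi2_sq (hρ : r ^ 2 + a ^ 2 * c ^ 2 ≠ 0) :
    -(128 * (q : ℂ) ^ 4 * ((c ^ 2 * a ^ 2 * m ^ 2 / 2)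
        + (-(I * a * m ^ 2 * r) + I * m * q ^ 2 * a) * c
        - m ^ 2 * r ^ 2 / 2 + m * q ^ 2 * r - q ^ 4 / 2)
        / (((r ^ 2 + a ^ 2 * c ^ 2 : ℝ) : ℂ) ^ 6 * ((r : ℂ) - I * a * c) ^ 4))
      = 256 * (phi11 r a c q : ℂ) ^ 2 * psi2 r a c m q ^ 2 := by
  obtain ⟨hz, hzb⟩ := sub_ne_zero_and_add_ne_zero hρ
  rw [numerator_eq_neg_half_sq, psi2, phi11]
  push_cast
  rw [← sub_mul_add_eq_sq_add_sq]
  field_simp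
  ring

theorem zakharyK_eq_div (r a c m q : ℝ) :
    ((-(16 * q ^ 4 *
        (-(3 * a ^ 2 * c ^ 2 * m * r) + a ^ 2 * c ^ 2 * q ^ 2 + m * r ^ 3 - q ^ 2 * r ^ 2)
        / (r ^ 2 + a ^ 2 * c ^ 2) ^ 7) : ℝ) : ℂ)
      + I * ((16 * a * q ^ 4 * (a ^ 2 * m * c ^ 3 - 3 * m * r ^ 2 * c + 2 * q ^ 2 * r * c)
        / (r ^ 2 + a ^ 2 * c ^ 2) ^ 7 : ℝ) : ℂ)
      = 16 * q ^ 4 * (q ^ 2 - m * (r + I * a * c)) * (r + I * a * c) ^ 2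
        / (r ^ 2 + a ^ 2 * c ^ 2) ^ 7 := by
  push_cast
  linear_combination (16 * (q : ℂ) ^ 4 * (3 * a ^ 2 * c ^ 2 * m * r - a ^ 2 * c ^ 2 * q ^ 2
    + I * a ^ 3 * c ^ 3 * m) / (r ^ 2 + a ^ 2 * c ^ 2) ^ 7) * I_sq

theorem zakharyK_eq_phi11_sq_mul_psi2 (hρ : r ^ 2 + a ^ 2 * c ^ 2 ≠ 0) :
    ((-(16 * q ^ 4 *
        (-(3 * a ^ 2 * c ^ 2 * m * r) + a ^ 2 * c ^ 2 * q ^ 2 + m * r ^ 3 - q ^ 2 * r ^ 2)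
        / (r ^ 2 + a ^ 2 * c ^ 2) ^ 7) : ℝ) : ℂ)
      + I * ((16 * a * q ^ 4 * (a ^ 2 * m * c ^ 3 - 3 * m * r ^ 2 * c + 2 * q ^ 2 * r * c)
        / (r ^ 2 + a ^ 2 * c ^ 2) ^ 7 : ℝ) : ℂ)
      = 64 * (phi11 r a c q : ℂ) ^ 2 * psi2 r a c m q := by
  obtain ⟨hz, hzb⟩ := sub_ne_zero_and_add_ne_zero hρ
  rw [zakharyK_eq_div, psi2, phi11]
  push_cast
  rw [← sub_mul_add_eq_sq_add_sq]
  field_simp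
  ring

end KerrNewman

theorem syzygy_3L2_eq_IK2_general
    (r a m q : ℝ) (c ρ2 : ℝ)
    (hρ2 : ρ2 = r ^ 2 + a ^ 2 * c ^ 2) (hρ : ρ2 ≠ 0)
    (𝕀 𝕂 𝕃 : ℂ) (I9 I10 : ℝ)
    (hI : 𝕀 = -(96 * ((c ^ 2 * a ^ 2 * m ^ 2 / 2)
        + (-(Complex.I * a * m ^ 2 * r) + Complex.I * m * q ^ 2 * a) * c
        - m ^ 2 * r ^ 2 / 2 + m * q ^ 2 * r - q ^ 4 / 2)
        / ((ρ2 : ℂ) ^ 2 * ((r : ℂ) - Complex.I * a * c) ^ 4)))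
    (hI9 : I9 = -(16 * q ^ 4 *
        (-(3 * a ^ 2 * c ^ 2 * m * r) + a ^ 2 * c ^ 2 * q ^ 2 + m * r ^ 3 - q ^ 2 * r ^ 2)
        / ρ2 ^ 7))
    (hI10 : I10 = 16 * a * q ^ 4 *
        (a ^ 2 * m * c ^ 3 - 3 * m * r ^ 2 * c + 2 * q ^ 2 * r * c) / ρ2 ^ 7)
    (hK : 𝕂 = (I9 : ℂ) + Complex.I * I10)
    (hL : 𝕃 = -(128 * (q : ℂ) ^ 4 * ((c ^ 2 * a ^ 2 * m ^ 2 / 2)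
        + (-(Complex.I * a * m ^ 2 * r) + Complex.I * m * q ^ 2 * a) * c
        - m ^ 2 * r ^ 2 / 2 + m * q ^ 2 * r - q ^ 4 / 2)
        / ((ρ2 : ℂ) ^ 6 * ((r : ℂ) - Complex.I * a * c) ^ 4))) :
    3 * 𝕃 ^ 2 = 𝕀 * 𝕂 ^ 2 := by
  subst hρ2 hI9 hI10
  rw [hI, hK, hL, KerrNewman.zakharyI_eq_psi2_sq hρ, KerrNewman.zakharyK_eq_phi11_sq_mul_psi2 hρ,
    KerrNewman.zakharyL_eq_phi11_sq_mul_psi2_sq hρ]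
  ring

/-- Syzygy `3 𝕃² = 𝕀 𝕂²` for the Kerr–Newman–(anti)-de Sitter black hole. -/
theorem syzygy_3L2_eq_IK2
    (r θ a m q : ℝ) (c ρ2 : ℝ)
    (hc : c = Real.cos θ) (hρ2 : ρ2 = r ^ 2 + a ^ 2 * c ^ 2) (hρ : ρ2 ≠ 0)
    (𝕀 𝕂 𝕃 : ℂ) (I9 I10 : ℝ)
    (hI : 𝕀 = -(96 * ((c ^ 2 * a ^ 2 * m ^ 2 / 2)
        + (-(Complex.I * a * m ^ 2 * r) + Complex.I * m * q ^ 2 * a) * c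
        - m ^ 2 * r ^ 2 / 2 + m * q ^ 2 * r - q ^ 4 / 2)
        / ((ρ2 : ℂ) ^ 2 * ((r : ℂ) - Complex.I * a * c) ^ 4)))
    (hI9 : I9 = -(16 * q ^ 4 *
        (-(3 * a ^ 2 * c ^ 2 * m * r) + a ^ 2 * c ^ 2 * q ^ 2 + m * r ^ 3 - q ^ 2 * r ^ 2)
        / ρ2 ^ 7))
    (hI10 : I10 = 16 * a * q ^ 4 *
        (a ^ 2 * m * c ^ 3 - 3 * m * r ^ 2 * c + 2 * q ^ 2 * r * c) / ρ2 ^ 7)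
    (hK : 𝕂 = (I9 : ℂ) + Complex.I * I10)
    (hL : 𝕃 = -(128 * (q : ℂ) ^ 4 * ((c ^ 2 * a ^ 2 * m ^ 2 / 2)
        + (-(Complex.I * a * m ^ 2 * r) + Complex.I * m * q ^ 2 * a) * c
        - m ^ 2 * r ^ 2 / 2 + m * q ^ 2 * r - q ^ 4 / 2)
        / ((ρ2 : ℂ) ^ 6 * ((r : ℂ) - Complex.I * a * c) ^ 4))) :
    3 * 𝕃 ^ 2 = 𝕀 * 𝕂 ^ 2 :=
  syzygy_3L2_eq_IK2_general r a m q c ρ2 hρ2 hρ 𝕀 𝕂 𝕃 I9 I10 hI hI9 hI10 hK hL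
end

section
/- Let $c = \cos\theta$, $\rho^2 = r^2 + a^2 c^2 \neq 0$, and let $I_5 = 4\Lambda$, $I_6 = \frac{4 q^4}{\rho^8} + 4\Lambda^2$, $\mathbb{M}_1 = I_{15} = \frac{4 q^4 (c^2 a^2 m^2 + r^2 m^2 - 2 m q^2 r + q^4)}{\rho^{16}}$, and $\mathbb{K} = I_9 + i I_{10}$ with $I_9 = -\frac{16 q^4(-3 a^2 c^2 m r + a^2 c^2 q^2 + m r^3 - q^2 r^2)}{\rho^{14}}$, $I_{10} = \frac{16 a q^4 (a^2 m c^3 - 3 m r^2 c + 2 q^2 r c)}{\rho^{14}}$. Then $16\,(I_6 - \tfrac{1}{4} I_5^2)\,\mathbb{M}_1 = |\mathbb{K}|^2$. -/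
/-!
With `z = r + i a cos θ`, so that `ρ² = |z|²`, the numerators of `I₉` and `I₁₀` are the real and
imaginary parts of `-16 q⁴ z² (m z - q²)`, and the numerator of `𝕄₁` is `4 q⁴ |m z - q²|²`.
Hence `|𝕂|² = 256 q⁸ |m z - q²|² / ρ²⁴`, which is `16 · (4 q⁴ / ρ⁸) · 𝕄₁` since
`I₆ - I₅² / 4 = 4 q⁴ / ρ⁸`: the cosmological constant drops out.
-/

open Complex

namespace KerrNewman

variable (x y m p : ℝ)

lemma sq_mul_mul_sub_eq :
    (x + y * I) ^ 2 * (m * (x + y * I) - p) =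
      (m * x ^ 3 - 3 * m * x * y ^ 2 - p * x ^ 2 + p * y ^ 2 : ℝ) +
        (3 * m * x ^ 2 * y - m * y ^ 3 - 2 * p * x * y : ℝ) * I := by
  push_cast
  linear_combination (3 * m * x * y ^ 2 - p * y ^ 2 + m * y ^ 3 * I : ℂ) * I_sq

lemma normSq_sq_mul_mul_sub :
    normSq ((x + y * I) ^ 2 * (m * (x + y * I) - p)) =
      (x ^ 2 + y ^ 2) ^ 2 * ((m * x - p) ^ 2 + (m * y) ^ 2) := by
  have h : m * (x + y * I) - p = (m * x - p : ℝ) + (m * y : ℝ) * I := by push_cast; ring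
  rw [map_mul, map_pow, h, normSq_add_mul_I, normSq_add_mul_I]

end KerrNewman

theorem syzygy_M1_K_modulus_general
    (r a m q Λ : ℝ) (c ρ2 : ℝ)
    (hρ2 : ρ2 = r ^ 2 + a ^ 2 * c ^ 2) (hρ : ρ2 ≠ 0)
    (I5 I6 M1 I9 I10 : ℝ) (𝕂 : ℂ)
    (hI5 : I5 = 4 * Λ)
    (hI6 : I6 = 4 * q ^ 4 / ρ2 ^ 4 + 4 * Λ ^ 2)
    (hM1 : M1 = 4 * q ^ 4 * (c ^ 2 * a ^ 2 * m ^ 2 + r ^ 2 * m ^ 2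
        - 2 * m * q ^ 2 * r + q ^ 4) / ρ2 ^ 8)
    (hI9 : I9 = -(16 * q ^ 4 *
        (-(3 * a ^ 2 * c ^ 2 * m * r) + a ^ 2 * c ^ 2 * q ^ 2 + m * r ^ 3 - q ^ 2 * r ^ 2)
        / ρ2 ^ 7))
    (hI10 : I10 = 16 * a * q ^ 4 *
        (a ^ 2 * m * c ^ 3 - 3 * m * r ^ 2 * c + 2 * q ^ 2 * r * c) / ρ2 ^ 7)
    (hK : 𝕂 = (I9 : ℂ) + Complex.I * I10) :
    ((16 * (I6 - (1 / 4) * I5 ^ 2) * M1 : ℝ) : ℂ) = 𝕂 * (starRingEnd ℂ) 𝕂 := by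
  have hKw : 𝕂 = (-(16 * q ^ 4) / ρ2 ^ 7 : ℝ) *
      ((r + (a * c : ℝ) * I) ^ 2 * (m * (r + (a * c : ℝ) * I) - (q ^ 2 : ℝ))) := by
    rw [hK, hI9, hI10, KerrNewman.sq_mul_mul_sub_eq]
    push_cast
    ring
  have hΛ : I6 - 1 / 4 * I5 ^ 2 = 4 * q ^ 4 / ρ2 ^ 4 := by
    rw [hI5, hI6]
    ring
  have hρ2' : r ^ 2 + (a * c) ^ 2 = ρ2 := by rw [hρ2]; ring
  rw [hKw, mul_conj, map_mul, KerrNewman.normSq_sq_mul_mul_sub, hΛ, hM1, normSq_ofReal, hρ2']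
  congr 1
  field_simp
  ring

/-- Syzygy `16 (I₆ - I₅²/4) 𝕄₁ = |𝕂|²` for the Kerr–Newman–(anti)-de Sitter black hole. -/
theorem syzygy_M1_K_modulus
    (r θ a m q Λ : ℝ) (c ρ2 : ℝ)
    (hc : c = Real.cos θ) (hρ2 : ρ2 = r ^ 2 + a ^ 2 * c ^ 2) (hρ : ρ2 ≠ 0)
    (I5 I6 M1 I9 I10 : ℝ) (𝕂 : ℂ)
    (hI5 : I5 = 4 * Λ)
    (hI6 : I6 = 4 * q ^ 4 / ρ2 ^ 4 + 4 * Λ ^ 2)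
    (hM1 : M1 = 4 * q ^ 4 * (c ^ 2 * a ^ 2 * m ^ 2 + r ^ 2 * m ^ 2
        - 2 * m * q ^ 2 * r + q ^ 4) / ρ2 ^ 8)
    (hI9 : I9 = -(16 * q ^ 4 *
        (-(3 * a ^ 2 * c ^ 2 * m * r) + a ^ 2 * c ^ 2 * q ^ 2 + m * r ^ 3 - q ^ 2 * r ^ 2)
        / ρ2 ^ 7))
    (hI10 : I10 = 16 * a * q ^ 4 *
        (a ^ 2 * m * c ^ 3 - 3 * m * r ^ 2 * c + 2 * q ^ 2 * r * c) / ρ2 ^ 7)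
    (hK : 𝕂 = (I9 : ℂ) + Complex.I * I10) :
    ((16 * (I6 - (1 / 4) * I5 ^ 2) * M1 : ℝ) : ℂ) = 𝕂 * (starRingEnd ℂ) 𝕂 :=
  syzygy_M1_K_modulus_general r a m q Λ c ρ2 hρ2 hρ I5 I6 M1 I9 I10 𝕂 hI5 hI6 hM1 hI9 hI10 hK
end

section
/- Let $c = \cos\theta$, $\rho^2 = r^2 + a^2 c^2 \neq 0$. Define $I_5 = 4\Lambda$, $I_6 = \frac{4 q^4}{\rho^8} + 4\Lambda^2$, the complex quantities $\mathbb{I} = -\frac{96\left(\frac{c^2 a^2 m^2}{2} + (-i a m^2 r + i m q^2 a) c - \frac{m^2 r^2}{2} + m q^2 r - \frac{q^4}{2}\right)}{\rho^4 (r - i a c)^4}$, $\mathbb{K} = I_9 + i I_{10}$ (with $I_9, I_{10}$ as in the Kerr–Newman–(anti)-de Sitter closed forms), and $\mathbb{M}_2 = -\frac{8 q^4 (c^2 a^2 m^2 + m^2 r^2 - 2 m r q^2 + q^4)(i c a m + m r - q^2)}{\rho^{18} (a^2 c^2 + 2 i c a r - r^2)}$. Then $3072\,(I_6 - \tfrac{1}{4}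 I_5^2)^2\,\mathbb{M}_2^2 = \mathbb{I}\,\mathbb{K}^2\,\overline{\mathbb{K}}^2$. -/
open Complex

/-!
With `w = r + i a c` and `z = conj w = r - i a c` we have `ρ² = z w`, and every invariant in the
syzygy is a monomial in `z`, `w`, `q` and `S = m w - q²`, `conj S = m z - q²`:
`I₆ - I₅²/4 = 4 q⁴ / ρ⁸`, `𝕀 = 48 S² / (ρ⁴ z⁴)`, `𝕂 = -16 q⁴ w² S / ρ¹⁴` and
`𝕄₂ = 8 q⁴ |S|² S / (ρ¹⁸ z²)`. The syzygy is then an identity of Laurent monomials, valid in any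
field once `z w = ρ² ≠ 0`.
-/

theorem syzygy_of_closed_forms {F : Type*} [Field F] {z w ρ2 : F} (hρ2 : ρ2 = z * w)
    (hρ : ρ2 ≠ 0) (q S T : F) :
    3072 * (4 * q ^ 4 / ρ2 ^ 4) ^ 2 * (8 * q ^ 4 * (S * T) * S / (ρ2 ^ 9 * z ^ 2)) ^ 2
      = 48 * S ^ 2 / (ρ2 ^ 2 * z ^ 4) * (-16 * q ^ 4 * w ^ 2 * S / ρ2 ^ 7) ^ 2
        * (-16 * q ^ 4 * z ^ 2 * T / ρ2 ^ 7) ^ 2 := by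
  subst hρ2
  obtain ⟨hz, hw⟩ := mul_ne_zero_iff.mp hρ
  field_simp
  ring

namespace KerrNewman

variable (r a c m q : ℝ)

theorem ofReal_rhoSq_eq :
    ((r ^ 2 + a ^ 2 * c ^ 2 : ℝ) : ℂ) = (r - I * a * c) * (r + I * a * c) := by
  push_cast
  linear_combination (a : ℂ) ^ 2 * c ^ 2 * I_sq

theorem weylI_numerator_eq :
    -(96 * ((c ^ 2 * a ^ 2 * m ^ 2 / 2)
        + (-(I * a * m ^ 2 * r) + I * m * q ^ 2 * a) * c
        - m ^ 2 * r ^ 2 / 2 + m * q ^ 2 * r - q ^ 4 / 2) : ℂ)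
      = 48 * (m * (r + I * a * c) - q ^ 2) ^ 2 := by
  linear_combination -48 * (a : ℂ) ^ 2 * c ^ 2 * m ^ 2 * I_sq

theorem K_numerator_eq :
    (-(3 * a ^ 2 * c ^ 2 * m * r) + a ^ 2 * c ^ 2 * q ^ 2 + m * r ^ 3 - q ^ 2 * r ^ 2 : ℂ)
        - I * a * (a ^ 2 * m * c ^ 3 - 3 * m * r ^ 2 * c + 2 * q ^ 2 * r * c)
      = (r + I * a * c) ^ 2 * (m * (r + I * a * c) - q ^ 2) := by
  linear_combination
    -(3 * m * r * (a : ℂ) ^ 2 * c ^ 2 + m * a ^ 3 * c ^ 3 * I - q ^ 2 * a ^ 2 * c ^ 2) * I_sq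

theorem M2_numerator_eq :
    ((c : ℂ) ^ 2 * a ^ 2 * m ^ 2 + m ^ 2 * r ^ 2 - 2 * m * r * q ^ 2 + q ^ 4)
      = (m * (r + I * a * c) - q ^ 2) * (m * (r - I * a * c) - q ^ 2) := by
  linear_combination (m : ℂ) ^ 2 * a ^ 2 * c ^ 2 * I_sq

theorem M2_denominator_eq :
    ((a : ℂ) ^ 2 * c ^ 2 + 2 * I * c * a * r - r ^ 2) = -(r - I * a * c) ^ 2 := by
  linear_combination (a : ℂ) ^ 2 * c ^ 2 * I_sq

end KerrNewman

theorem syzygy_M2_squared_general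
    (r a m q Λ : ℝ) (c ρ2 : ℝ)
    (hρ2 : ρ2 = r ^ 2 + a ^ 2 * c ^ 2) (hρ : ρ2 ≠ 0)
    (I5 I6 I9 I10 : ℝ) (𝕀 𝕂 M2 : ℂ)
    (hI5 : I5 = 4 * Λ)
    (hI6 : I6 = 4 * q ^ 4 / ρ2 ^ 4 + 4 * Λ ^ 2)
    (hI : 𝕀 = -(96 * ((c ^ 2 * a ^ 2 * m ^ 2 / 2)
        + (-(Complex.I * a * m ^ 2 * r) + Complex.I * m * q ^ 2 * a) * c
        - m ^ 2 * r ^ 2 / 2 + m * q ^ 2 * r - q ^ 4 / 2)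
        / ((ρ2 : ℂ) ^ 2 * ((r : ℂ) - Complex.I * a * c) ^ 4)))
    (hI9 : I9 = -(16 * q ^ 4 *
        (-(3 * a ^ 2 * c ^ 2 * m * r) + a ^ 2 * c ^ 2 * q ^ 2 + m * r ^ 3 - q ^ 2 * r ^ 2)
        / ρ2 ^ 7))
    (hI10 : I10 = 16 * a * q ^ 4 *
        (a ^ 2 * m * c ^ 3 - 3 * m * r ^ 2 * c + 2 * q ^ 2 * r * c) / ρ2 ^ 7)
    (hK : 𝕂 = (I9 : ℂ) + Complex.I * I10)
    (hM2 : M2 = -(8 * (q : ℂ) ^ 4 *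
        ((c : ℂ) ^ 2 * a ^ 2 * m ^ 2 + m ^ 2 * r ^ 2 - 2 * m * r * q ^ 2 + q ^ 4) *
        (Complex.I * c * a * m + m * r - q ^ 2)
        / ((ρ2 : ℂ) ^ 9 * ((a : ℂ) ^ 2 * c ^ 2 + 2 * Complex.I * c * a * r - r ^ 2)))) :
    3072 * ((I6 - (1 / 4) * I5 ^ 2 : ℝ) : ℂ) ^ 2 * M2 ^ 2
      = 𝕀 * 𝕂 ^ 2 * ((starRingEnd ℂ) 𝕂) ^ 2 := by
  have hρC : (ρ2 : ℂ) = (r - I * a * c) * (r + I * a * c) := by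
    rw [hρ2, KerrNewman.ofReal_rhoSq_eq]
  have hI6_sub : ((I6 - (1 / 4) * I5 ^ 2 : ℝ) : ℂ) = 4 * q ^ 4 / ρ2 ^ 4 := by
    rw [hI6, hI5]; push_cast; ring
  have h𝕀 : 𝕀 = 48 * (m * (r + I * a * c) - q ^ 2) ^ 2 / (ρ2 ^ 2 * (r - I * a * c) ^ 4) := by
    rw [hI, ← neg_div, KerrNewman.weylI_numerator_eq]
  have h𝕂 : 𝕂 = -16 * q ^ 4 * (r + I * a * c) ^ 2 * (m * (r + I * a * c) - q ^ 2) / ρ2 ^ 7 := by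
    rw [hK, hI9, hI10]; push_cast
    linear_combination (-16 * (q : ℂ) ^ 4 / ρ2 ^ 7) * KerrNewman.K_numerator_eq r a c m q
  have h𝕂bar : starRingEnd ℂ 𝕂
      = -16 * q ^ 4 * (r - I * a * c) ^ 2 * (m * (r - I * a * c) - q ^ 2) / ρ2 ^ 7 := by
    rw [h𝕂]
    simp only [neg_mul, map_div₀, map_neg, map_mul, map_ofNat, map_pow, map_add, map_sub,
      conj_ofReal, conj_I]
    ring
  have hM2' : M2 = 8 * q ^ 4 * ((m * (r + I * a * c) - q ^ 2) * (m * (r - I * a * c) - q ^ 2))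
      * (m * (r + I * a * c) - q ^ 2) / (ρ2 ^ 9 * (r - I * a * c) ^ 2) := by
    rw [hM2, KerrNewman.M2_numerator_eq, KerrNewman.M2_denominator_eq, mul_neg, div_neg, neg_neg]
    ring
  rw [hI6_sub, hM2', h𝕀, h𝕂bar, h𝕂]
  exact syzygy_of_closed_forms hρC (ofReal_ne_zero.mpr hρ) _ _ _

/-- Syzygy `3072 (I₆ - I₅²/4)² 𝕄₂² = 𝕀 𝕂² (conj 𝕂)²` for Kerr–Newman–(anti)-de Sitter. -/
theorem syzygy_M2_squared
    (r θ a m q Λ : ℝ) (c ρ2 : ℝ)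
    (hc : c = Real.cos θ) (hρ2 : ρ2 = r ^ 2 + a ^ 2 * c ^ 2) (hρ : ρ2 ≠ 0)
    (I5 I6 I9 I10 : ℝ) (𝕀 𝕂 M2 : ℂ)
    (hI5 : I5 = 4 * Λ)
    (hI6 : I6 = 4 * q ^ 4 / ρ2 ^ 4 + 4 * Λ ^ 2)
    (hI : 𝕀 = -(96 * ((c ^ 2 * a ^ 2 * m ^ 2 / 2)
        + (-(Complex.I * a * m ^ 2 * r) + Complex.I * m * q ^ 2 * a) * c
        - m ^ 2 * r ^ 2 / 2 + m * q ^ 2 * r - q ^ 4 / 2)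
        / ((ρ2 : ℂ) ^ 2 * ((r : ℂ) - Complex.I * a * c) ^ 4)))
    (hI9 : I9 = -(16 * q ^ 4 *
        (-(3 * a ^ 2 * c ^ 2 * m * r) + a ^ 2 * c ^ 2 * q ^ 2 + m * r ^ 3 - q ^ 2 * r ^ 2)
        / ρ2 ^ 7))
    (hI10 : I10 = 16 * a * q ^ 4 *
        (a ^ 2 * m * c ^ 3 - 3 * m * r ^ 2 * c + 2 * q ^ 2 * r * c) / ρ2 ^ 7)
    (hK : 𝕂 = (I9 : ℂ) + Complex.I * I10)
    (hM2 : M2 = -(8 * (q : ℂ) ^ 4 *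
        ((c : ℂ) ^ 2 * a ^ 2 * m ^ 2 + m ^ 2 * r ^ 2 - 2 * m * r * q ^ 2 + q ^ 4) *
        (Complex.I * c * a * m + m * r - q ^ 2)
        / ((ρ2 : ℂ) ^ 9 * ((a : ℂ) ^ 2 * c ^ 2 + 2 * Complex.I * c * a * r - r ^ 2)))) :
    3072 * ((I6 - (1 / 4) * I5 ^ 2 : ℝ) : ℂ) ^ 2 * M2 ^ 2
      = 𝕀 * 𝕂 ^ 2 * ((starRingEnd ℂ) 𝕂) ^ 2 :=
  syzygy_M2_squared_general r a m q Λ c ρ2 hρ2 hρ I5 I6 I9 I10 𝕀 𝕂 M2 hI5 hI6 hI hI9 hI10 hK hM2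
end

section
/- Let $c = \cos\theta$ and $\rho^2 = r^2 + a^2 c^2 \neq 0$. For the accelerating Kerr–Newman–(anti)-de Sitter black hole the Ricci invariants satisfy $I_6 = \frac{4 q^4 (1 - \alpha r c)^8}{\rho^8} + 4\Lambda^2$, $I_7 = \frac{12 \Lambda q^4 (1 - \alpha r c)^8}{\rho^8} + 4\Lambda^3$, $I_8 = \frac{4 q^8 (1 - \alpha r c)^{16}}{\rho^{16}} + 4\left(\frac{12\Lambda q^4 (1-\alpha r c)^8}{\rho^8} + 4\Lambda^3\right)\Lambda - 6\left(\frac{4 q^4 (1-\alpha r c)^8}{\rho^8} + 4\Lambda^2\right)\Lambda^2 + 12\Lambda^4$, and $I_5 = 4\Lambda$. Then the syzygy $I_6^2 = 4 I_8 - \tfrac{4}{3} I_7 I_5 + \tfrac{1}{12} I_5^4$ holds. -/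
/-! For a Ricci tensor built from a cosmological term `Λ` and a single Maxwell-type scalar `s`
(here `s = q⁴ (1 - α r c)⁸ / ρ⁸`), the invariants `I₅, …, I₈` are polynomials in `s` and `Λ`,
and the syzygy is a polynomial identity in these two quantities. -/

theorem ricci_syzygy_of_invariants {K : Type*} [Field K] [CharZero K] (s Λ I5 I6 I7 I8 : K)
    (hI5 : I5 = 4 * Λ) (hI6 : I6 = 4 * s + 4 * Λ ^ 2) (hI7 : I7 = 12 * Λ * s + 4 * Λ ^ 3)
    (hI8 : I8 = 4 * s ^ 2 + 4 * I7 * Λ - 6 * I6 * Λ ^ 2 + 12 * Λ ^ 4) :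
    I6 ^ 2 = 4 * I8 - (4 / 3) * I7 * I5 + (1 / 12) * I5 ^ 4 := by
  subst hI5 hI6 hI7 hI8
  ring

theorem ricci_syzygy_accel_KNdS_general
    (r q Λ α : ℝ) (c ρ2 : ℝ)
    (I5 I6 I7 I8 : ℝ)
    (hI5 : I5 = 4 * Λ)
    (hI6 : I6 = 4 * q ^ 4 * (1 - α * r * c) ^ 8 / ρ2 ^ 4 + 4 * Λ ^ 2)
    (hI7 : I7 = 12 * Λ * q ^ 4 * (1 - α * r * c) ^ 8 / ρ2 ^ 4 + 4 * Λ ^ 3)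
    (hI8 : I8 = 4 * q ^ 8 * (1 - α * r * c) ^ 16 / ρ2 ^ 8
        + 4 * (12 * Λ * q ^ 4 * (1 - α * r * c) ^ 8 / ρ2 ^ 4 + 4 * Λ ^ 3) * Λ
        - 6 * (4 * q ^ 4 * (1 - α * r * c) ^ 8 / ρ2 ^ 4 + 4 * Λ ^ 2) * Λ ^ 2
        + 12 * Λ ^ 4) :
    I6 ^ 2 = 4 * I8 - (4 / 3) * I7 * I5 + (1 / 12) * I5 ^ 4 := by
  apply ricci_syzygy_of_invariants (q ^ 4 * (1 - α * r * c) ^ 8 / ρ2 ^ 4) Λ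
  · exact hI5
  · rw [hI6]; ring
  · rw [hI7]; ring
  · rw [hI8, hI6, hI7]; ring

/-- Ricci syzygy for the accelerating Kerr–Newman–(anti)-de Sitter black hole. -/
theorem ricci_syzygy_accel_KNdS
    (r θ a m q Λ α : ℝ) (c ρ2 : ℝ)
    (hc : c = Real.cos θ) (hρ2 : ρ2 = r ^ 2 + a ^ 2 * c ^ 2) (hρ : ρ2 ≠ 0)
    (I5 I6 I7 I8 : ℝ)
    (hI5 : I5 = 4 * Λ)
    (hI6 : I6 = 4 * q ^ 4 * (1 - α * r * c) ^ 8 / ρ2 ^ 4 + 4 * Λ ^ 2)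
    (hI7 : I7 = 12 * Λ * q ^ 4 * (1 - α * r * c) ^ 8 / ρ2 ^ 4 + 4 * Λ ^ 3)
    (hI8 : I8 = 4 * q ^ 8 * (1 - α * r * c) ^ 16 / ρ2 ^ 8
        + 4 * (12 * Λ * q ^ 4 * (1 - α * r * c) ^ 8 / ρ2 ^ 4 + 4 * Λ ^ 3) * Λ
        - 6 * (4 * q ^ 4 * (1 - α * r * c) ^ 8 / ρ2 ^ 4 + 4 * Λ ^ 2) * Λ ^ 2
        + 12 * Λ ^ 4) :
    I6 ^ 2 = 4 * I8 - (4 / 3) * I7 * I5 + (1 / 12) * I5 ^ 4 :=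
  ricci_syzygy_accel_KNdS_general r q Λ α c ρ2 I5 I6 I7 I8 hI5 hI6 hI7 hI8
end

section
/- Let $c = \cos\theta$, $a, m, q, r \in \mathbb{R}$ with $\rho^2 = r^2 + a^2 c^2 \neq 0$ and $r - i a c \neq 0$. With $\Psi_2 = -\frac{i c m a + m r - q^2}{(r - i a c)^3 (r + i a c)}$, the complex invariant $\mathbb{I} = 48 \Psi_2^2$ satisfies: the imaginary part of $\mathbb{I}$ equals $-K_2$, where $K_2 = \frac{96 a}{\rho^{12}}(a^2 m c^3 - 3 m r^2 c + 2 q^2 r c)(-3 a^2 c^2 m r + a^2 c^2 q^2 + m r^3 - q^2 r^2)$. In particular, if $a = 0$ then $\Psi_2$ is real and $K_2 = 0$. -/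
/-!
With `w = r + i a c` the denominator of `Ψ₂` is `w̄³ w`, and since `w̄ w = ρ²` its inverse is
`w² / ρ⁶`. Hence `Ψ₂ = -(m w - q²) w² / ρ⁶` and `48 Ψ₂² = 48 ((m w - q²) w²)² / ρ¹²` is a
polynomial in `w` over a real denominator, whose imaginary part is the polynomial `-ρ¹² K₂`.
-/

open Complex

open ComplexConjugate

theorem inv_conj_pow_three_mul_self (w : ℂ) :
    (conj w ^ 3 * w)⁻¹ = w ^ 2 / (normSq w : ℂ) ^ 3 := by
  rcases eq_or_ne w 0 with rfl | hw
  · simp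
  have hn : (normSq w : ℂ) = conj w * w := by rw [mul_comm, mul_conj]
  have hc : conj w ≠ 0 := by simpa using hw
  rw [hn]
  field_simp

theorem im_sq_mul_sq_sub (x s m q : ℝ) :
    (((m * (x + s * I) - q ^ 2) * (x + s * I) ^ 2) ^ 2).im =
      -2 * s * (m * s ^ 2 - 3 * m * x ^ 2 + 2 * q ^ 2 * x) *
        (m * x ^ 3 - 3 * m * x * s ^ 2 + q ^ 2 * s ^ 2 - q ^ 2 * x ^ 2) := by
  simp only [sq, mul_im, mul_re, add_re, add_im, sub_re, sub_im, ofReal_re, ofReal_im, I_re, I_im]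
  ring

theorem kerrNewman_weyl_scalar_eq (r s m q : ℝ) :
    -((I * s * m + m * r - q ^ 2) / (((r : ℂ) - I * s) ^ 3 * ((r : ℂ) + I * s))) =
      -((m * (r + s * I) - q ^ 2) * (r + s * I) ^ 2) / ((r ^ 2 + s ^ 2 : ℝ) : ℂ) ^ 3 := by
  have hconj : conj ((r : ℂ) + s * I) = r - I * s := by simp [mul_comm, sub_eq_add_neg]
  have hnormSq : normSq ((r : ℂ) + s * I) = r ^ 2 + s ^ 2 := by simp [normSq_apply, sq]
  have hden : ((r : ℂ) - I * s) ^ 3 * ((r : ℂ) + I * s) = conj (r + s * I) ^ 3 * (r + s * I) := by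
    rw [hconj, mul_comm I]
  rw [hden, ← hnormSq, div_eq_mul_inv, inv_conj_pow_three_mul_self]
  ring

theorem im_of_I_eq_neg_K2_general
    (r a m q : ℝ) (c ρ2 : ℝ)
    (hρ2 : ρ2 = r ^ 2 + a ^ 2 * c ^ 2)
    (Ψ2 : ℂ) (K2 : ℝ)
    (hΨ2 : Ψ2 = -((Complex.I * c * m * a + m * r - q ^ 2) /
        (((r : ℂ) - Complex.I * a * c) ^ 3 * ((r : ℂ) + Complex.I * a * c))))
    (hK2 : K2 = (96 * a / ρ2 ^ 6) *
      (a ^ 2 * m * c ^ 3 - 3 * m * r ^ 2 * c + 2 * q ^ 2 * r * c) *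
      (-(3 * a ^ 2 * c ^ 2 * m * r) + a ^ 2 * c ^ 2 * q ^ 2 + m * r ^ 3 - q ^ 2 * r ^ 2)) :
    (48 * Ψ2 ^ 2).im = -K2 ∧ (a = 0 → Ψ2.im = 0 ∧ K2 = 0) := by
  have hΨ : Ψ2 = -((m * (r + (a * c : ℝ) * I) - q ^ 2) * (r + (a * c : ℝ) * I) ^ 2) /
      (ρ2 : ℂ) ^ 3 := by
    rw [hΨ2, hρ2, ← mul_pow, ← kerrNewman_weyl_scalar_eq]
    push_cast
    ring_nf
  have hsq : 48 * Ψ2 ^ 2 =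
      48 * ((m * (r + (a * c : ℝ) * I) - q ^ 2) * (r + (a * c : ℝ) * I) ^ 2) ^ 2 /
        ((ρ2 ^ 6 : ℝ) : ℂ) := by
    rw [hΨ]; push_cast; ring
  refine ⟨?_, fun ha => ⟨?_, by simp [hK2, ha]⟩⟩
  · rw [hsq, div_ofReal_im, mul_im, re_ofNat, im_ofNat, im_sq_mul_sq_sub, hK2]
    ring
  · rw [hΨ, ha, zero_mul, ofReal_zero, zero_mul, add_zero]
    norm_cast

/-- The imaginary part of `𝕀 = 48 Ψ₂²` equals `-K₂`, and for `a = 0` the Weyl scalar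
is real and the Chern–Pontryagin invariant vanishes. -/
theorem im_of_I_eq_neg_K2
    (r θ a m q : ℝ) (c ρ2 : ℝ)
    (hc : c = Real.cos θ) (hρ2 : ρ2 = r ^ 2 + a ^ 2 * c ^ 2) (hρ : ρ2 ≠ 0)
    (hrac : (r : ℂ) - Complex.I * a * c ≠ 0)
    (Ψ2 : ℂ) (K2 : ℝ)
    (hΨ2 : Ψ2 = -((Complex.I * c * m * a + m * r - q ^ 2) /
        (((r : ℂ) - Complex.I * a * c) ^ 3 * ((r : ℂ) + Complex.I * a * c))))
    (hK2 : K2 = (96 * a / ρ2 ^ 6) *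
      (a ^ 2 * m * c ^ 3 - 3 * m * r ^ 2 * c + 2 * q ^ 2 * r * c) *
      (-(3 * a ^ 2 * c ^ 2 * m * r) + a ^ 2 * c ^ 2 * q ^ 2 + m * r ^ 3 - q ^ 2 * r ^ 2)) :
    (48 * Ψ2 ^ 2).im = -K2 ∧ (a = 0 → Ψ2.im = 0 ∧ K2 = 0) :=
  im_of_I_eq_neg_K2_general r a m q c ρ2 hρ2 Ψ2 K2 hΨ2 hK2
end
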